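/- Let p, q be nonzero complex numbers with |p| < 1, |q| < 1 and let m ∈ ℤ. For every nonzero z ∈ ℂ not a pole of either side, γ^{(1)}(z, m; p,q) = θ(z; pq | p)_m · θ(qz; pq | q)_{−m} · Γ(z; p,q). Consequently, with σ, τ ∈ ℂ satisfying σ² = pq, τ² = p/q and στ = p, one has Γ^{(1)}(z, m; p,q) = Γ(z; p,q) for every m ∈ ℤ. -/

import Mathlib

open Complex Finset

noncomputable section

/-- The infinite q-Pochhammer symbol `(z;p)_∞ = ∏_{j≥0} (1 - z p^j)`. -/
def qPochInf (z p : ℂ) : ℂ := ∏' j : ℕ, (1 - z * p ^ j)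

/-- The theta function `θ(z;p) = (z;p)_∞ (p z⁻¹; p)_∞`. -/
def theta0 (z p : ℂ) : ℂ := qPochInf z p * qPochInf (p * z⁻¹) p

/-- The elliptic gamma function `Γ(z;p,q)`. -/
def ellGamma (z p q : ℂ) : ℂ :=
  ∏' jk : ℕ × ℕ,
    (1 - z⁻¹ * p ^ (jk.1 + 1) * q ^ (jk.2 + 1)) / (1 - z * p ^ jk.1 * q ^ jk.2)

/-- The second order elliptic gamma function `Γ(z;p,q,t)`. -/
def ellGamma3 (z p q t : ℂ) : ℂ :=
  ∏' x : ℕ × ℕ × ℕ,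
    (1 - z * p ^ x.1 * q ^ x.2.1 * t ^ x.2.2) *
      (1 - z⁻¹ * p ^ (x.1 + 1) * q ^ (x.2.1 + 1) * t ^ (x.2.2 + 1))

/-- The lens space elliptic gamma function `γ^{(r)}(z,m;p,q)`. -/
def lensGamma (r : ℕ) (z : ℂ) (m : ℤ) (p q : ℂ) : ℂ :=
  ellGamma (z * p ^ m) (p ^ r) (p * q) * ellGamma (z * q ^ ((r : ℤ) - m)) (q ^ r) (p * q)

/-- The rarefied elliptic gamma function `Γ^{(r)}(z,m;p,q)`, built with fixed
square roots σ, τ satisfying `σ² = pq`, `τ² = p/q`, `στ = p`. -/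
def rarGamma (r : ℕ) (z : ℂ) (m : ℤ) (p q σ τ : ℂ) : ℂ :=
  (-z / σ) ^ (m * (m - 1) / 2) * τ ^ (m * (m - 1) * (2 * m - 1) / 6) * lensGamma r z m p q

/-- `w` avoids the pole set `{P^{-j} Q^{-k} : j,k ≥ 0}` of `ellGamma w P Q`. -/
def notPole (w P Q : ℂ) : Prop := ∀ j k : ℕ, w ≠ P ^ (-(j : ℤ)) * Q ^ (-(k : ℤ))

/-- `z` is not a pole of either elliptic gamma factor of `lensGamma r z m p q`. -/
def lensReg (r : ℕ) (z : ℂ) (m : ℤ) (p q : ℂ) : Prop :=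
  notPole (z * p ^ m) (p ^ r) (p * q) ∧ notPole (z * q ^ ((r : ℤ) - m)) (q ^ r) (p * q)

/-- The elliptic Pochhammer symbol `θ(x;p|q)_n`. -/
def ellPoch (x p q : ℂ) (n : ℤ) : ℂ :=
  if 0 ≤ n then ∏ j ∈ Finset.range n.toNat, theta0 (x * q ^ (j : ℤ)) p
  else (∏ j ∈ Finset.range (-n).toNat, theta0 (x * q ^ (-(j : ℤ) - 1)) p)⁻¹

/-!
Write `Γ(w;a,b) = (w⁻¹ab;a,b)_∞ / (w;a,b)_∞` with the double product
`(w;a,b)_∞ = ∏_{j,k ≥ 0} (1 - w a^j b^k)` (`qPochInf₂`). Splitting off the row `j = 0` gives the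
shift `Γ(wa;a,t) = θ(w;t) Γ(w;a,t)`, and cutting `ℕ × ℕ` along the diagonal gives
`(w;p,q)_∞ = (w;p,pq)_∞ (wq;q,pq)_∞`, hence `Γ(z;p,pq) Γ(qz;q,pq) = Γ(z;p,q)`. As
`γ^{(1)}(z,m;p,q) = Γ(zp^m;p,pq) Γ(qz·q^{-m};q,pq)`, iterating the shift in both factors gives the
first identity. For the second, the quasi-periodicity `θ(x;t) = -x θ(xt;t)` gives
`θ(zq^{-j};pq) = (-z/σ)^j τ^{j²} θ(zp^j;pq)` for all `j ∈ ℤ`. Since `θ(qz;pq|q)_{-m}` is the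
inverse of `θ(z;pq|q⁻¹)_m`, the product of the two elliptic Pochhammer symbols is the inverse of
`∏_{0 ≤ j < m} (-z/σ)^j τ^{j²} = (-z/σ)^{m(m-1)/2} τ^{m(m-1)(2m-1)/6}`, the prefactor of `Γ^{(1)}`.
-/

open Function

section Reindex

variable {α β γ δ : Type*} [CommMonoid α] [TopologicalSpace α] [ContinuousMul α]
  {f : β → α} {g₁ : γ → β} {g₂ : δ → β}

theorem HasProd.mul_of_isCompl_range {a b : α} (hg₁ : Injective g₁) (hg₂ : Injective g₂)
    (hc : IsCompl (Set.range g₁) (Set.range g₂))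
    (ha : HasProd (f ∘ g₁) a) (hb : HasProd (f ∘ g₂) b) : HasProd f (a * b) :=
  (hg₁.hasProd_range_iff.2 ha).mul_isCompl hc (hg₂.hasProd_range_iff.2 hb)

theorem tprod_eq_mul_of_isCompl_range [T2Space α] (hg₁ : Injective g₁) (hg₂ : Injective g₂)
    (hc : IsCompl (Set.range g₁) (Set.range g₂))
    (h₁ : Multipliable (f ∘ g₁)) (h₂ : Multipliable (f ∘ g₂)) :
    ∏' x, f x = (∏' y, f (g₁ y)) * ∏' y, f (g₂ y) :=
  (h₁.hasProd.mul_of_isCompl_range hg₁ hg₂ hc h₂.hasProd).tprod_eq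

end Reindex

lemma norm_mul_lt_one {R : Type*} [SeminormedRing R] {a b : R} (ha : ‖a‖ < 1) (hb : ‖b‖ < 1) :
    ‖a * b‖ < 1 :=
  (norm_mul_le a b).trans_lt (mul_lt_one_of_nonneg_of_lt_one_left (norm_nonneg a) ha hb.le)

lemma summable_norm_mul_pow_mul_pow {w a b : ℂ} (ha : ‖a‖ < 1) (hb : ‖b‖ < 1) :
    Summable fun x : ℕ × ℕ => ‖w * a ^ x.1 * b ^ x.2‖ := by
  have h := ((summable_geometric_of_lt_one (norm_nonneg a) ha).mul_left ‖w‖).mul_of_nonneg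
    (summable_geometric_of_lt_one (norm_nonneg b) hb) (fun _ => by positivity)
    (fun _ => by positivity)
  exact h.congr fun x => by simp [mul_assoc]

lemma multipliable_one_sub_mul_pow_mul_pow {w a b : ℂ} (ha : ‖a‖ < 1) (hb : ‖b‖ < 1) :
    Multipliable fun x : ℕ × ℕ => 1 - w * a ^ x.1 * b ^ x.2 := by
  simpa [sub_eq_add_neg] using
    multipliable_one_add_of_summable (f := fun x : ℕ × ℕ => -(w * a ^ x.1 * b ^ x.2))
      (by simpa using summable_norm_mul_pow_mul_pow ha hb)

lemma multipliable_one_sub_mul_pow {w t : ℂ} (ht : ‖t‖ < 1) :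
    Multipliable fun k : ℕ => 1 - w * t ^ k := by
  simpa [sub_eq_add_neg] using
    multipliable_one_add_of_summable (f := fun k : ℕ => -(w * t ^ k))
      (by simpa using (summable_geometric_of_lt_one (norm_nonneg t) ht).mul_left ‖w‖)

lemma qPochInf_ne_zero {w t : ℂ} (ht : ‖t‖ < 1) (h : ∀ k : ℕ, w * t ^ k ≠ 1) :
    qPochInf w t ≠ 0 := by
  simpa [qPochInf, sub_eq_add_neg] using
    tprod_one_add_ne_zero_of_summable (f := fun k : ℕ => -(w * t ^ k))
      (fun k => by rw [← sub_eq_add_neg]; exact sub_ne_zero.2 (h k).symm)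
      (by simpa using (summable_geometric_of_lt_one (norm_nonneg t) ht).mul_left ‖w‖)

lemma qPochInf_eq_one_sub_mul {w t : ℂ} (ht : ‖t‖ < 1) :
    qPochInf w t = (1 - w) * qPochInf (w * t) t := by
  rw [qPochInf, tprod_eq_zero_mul' ((multipliable_one_sub_mul_pow (w := w * t) ht).congr
    fun k => by ring), qPochInf]
  congr 1
  · simp
  · exact tprod_congr fun k => by ring

lemma theta0_eq_neg_mul {w t : ℂ} (ht1 : ‖t‖ < 1) (ht : t ≠ 0) (hw : w ≠ 0) :
    theta0 w t = -w * theta0 (w * t) t := by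
  rw [theta0, theta0, qPochInf_eq_one_sub_mul (w := w) ht1, show t * (w * t)⁻¹ = w⁻¹ by
    field_simp, qPochInf_eq_one_sub_mul (w := w⁻¹) ht1, mul_comm w⁻¹ t]
  field_simp
  ring

lemma theta0_eq_mul_zpow {x t σ : ℂ} (ht1 : ‖t‖ < 1) (hσ0 : σ ≠ 0) (hσ : σ ^ 2 = t)
    (hx : x ≠ 0) (j : ℤ) :
    theta0 x t = (-x / σ) ^ j * σ ^ (j ^ 2) * theta0 (x * t ^ j) t := by
  have ht : t ≠ 0 := hσ ▸ pow_ne_zero 2 hσ0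
  have hstep (k : ℤ) : theta0 (x * t ^ k) t = -(x * t ^ k) * theta0 (x * t ^ (k + 1)) t := by
    rw [zpow_add_one₀ ht, ← mul_assoc]
    exact theta0_eq_neg_mul ht1 ht (mul_ne_zero hx (zpow_ne_zero _ ht))
  have hc (k : ℤ) : (-x / σ) ^ (k + 1) * σ ^ ((k + 1) ^ 2) =
      (-x / σ) ^ k * σ ^ (k ^ 2) * -(x * t ^ k) := by
    rw [zpow_add_one₀ (div_ne_zero (neg_ne_zero.2 hx) hσ0),
      show (k + 1) ^ 2 = k ^ 2 + 2 * k + 1 by ring, zpow_add₀ hσ0, zpow_add₀ hσ0, zpow_one,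
      zpow_mul, ← hσ, zpow_ofNat]
    field_simp
  induction j using Int.induction_on with
  | zero => simp
  | succ i ih => rw [ih, hstep, hc]; ring
  | pred i ih =>
    rw [hstep (-i - 1), sub_add_cancel, ← mul_assoc, ← hc, sub_add_cancel]
    exact ih

def qPochInf₂ (w a b : ℂ) : ℂ := ∏' x : ℕ × ℕ, (1 - w * a ^ x.1 * b ^ x.2)

lemma qPochInf₂_ne_zero {w a b : ℂ} (ha : ‖a‖ < 1) (hb : ‖b‖ < 1)
    (h : ∀ j k : ℕ, w * a ^ j * b ^ k ≠ 1) : qPochInf₂ w a b ≠ 0 := by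
  simpa [qPochInf₂, sub_eq_add_neg] using
    tprod_one_add_ne_zero_of_summable (f := fun x : ℕ × ℕ => -(w * a ^ x.1 * b ^ x.2))
      (fun x => by rw [← sub_eq_add_neg]; exact sub_ne_zero.2 (h x.1 x.2).symm)
      (by simpa using summable_norm_mul_pow_mul_pow ha hb)

lemma qPochInf₂_comm (w a b : ℂ) : qPochInf₂ w a b = qPochInf₂ w b a := by
  rw [qPochInf₂, ← (Equiv.prodComm ℕ ℕ).tprod_eq]
  exact tprod_congr fun x => by simp [mul_right_comm]

lemma qPochInf₂_eq_qPochInf_mul {w a b : ℂ} (ha : ‖a‖ < 1) (hb : ‖b‖ < 1) :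
    qPochInf₂ w a b = qPochInf w b * qPochInf₂ (w * a) a b := by
  have hc : IsCompl (Set.range fun k : ℕ => (0, k))
      (Set.range fun x : ℕ × ℕ => (x.1 + 1, x.2)) := by
    constructor
    · rw [Set.disjoint_left]
      rintro _ ⟨k, rfl⟩ ⟨x, hx⟩
      simp [Prod.ext_iff] at hx
    · refine codisjoint_iff.2 (Set.eq_univ_of_forall ?_)
      rintro ⟨j, k⟩
      rcases j with _ | j
      · exact Or.inl ⟨k, rfl⟩
      · exact Or.inr ⟨(j, k), rfl⟩
  rw [qPochInf₂, tprod_eq_mul_of_isCompl_range (fun _ _ h => (Prod.ext_iff.1 h).2)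
    (fun x y h => by simpa [Prod.ext_iff] using h) hc
    ((multipliable_one_sub_mul_pow (w := w) hb).congr fun k => by simp)
    ((multipliable_one_sub_mul_pow_mul_pow (w := w * a) ha hb).congr fun x => by
      simp only [comp_apply, pow_succ]; ring)]
  congr 1
  · exact tprod_congr fun k => by simp
  · exact tprod_congr fun x => by simp only [pow_succ]; ring

lemma qPochInf₂_eq_mul {w a b : ℂ} (ha : ‖a‖ < 1) (hb : ‖b‖ < 1) :
    qPochInf₂ w a b = qPochInf₂ w a (a * b) * qPochInf₂ (w * b) b (a * b) := by
  have hab : ‖a * b‖ < 1 := norm_mul_lt_one ha hb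
  have hc : IsCompl (Set.range fun x : ℕ × ℕ => (x.1 + x.2, x.2))
      (Set.range fun x : ℕ × ℕ => (x.2, x.1 + x.2 + 1)) := by
    constructor
    · rw [Set.disjoint_left]
      rintro _ ⟨x, rfl⟩ ⟨y, hy⟩
      simp only [Prod.ext_iff] at hy
      omega
    · refine codisjoint_iff.2 (Set.eq_univ_of_forall ?_)
      rintro ⟨j, k⟩
      rcases le_or_gt k j with h | h
      · exact Or.inl ⟨(j - k, k), Prod.ext (Nat.sub_add_cancel h) rfl⟩
      · exact Or.inr ⟨(k - j - 1, j), Prod.ext rfl (by simp only; omega)⟩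
  rw [qPochInf₂, tprod_eq_mul_of_isCompl_range
    (fun x y h => by simp only [Prod.ext_iff] at h ⊢; omega)
    (fun x y h => by simp only [Prod.ext_iff] at h ⊢; omega) hc
    ((multipliable_one_sub_mul_pow_mul_pow (w := w) ha hab).congr fun x => by
      simp only [comp_apply]; ring)
    ((multipliable_one_sub_mul_pow_mul_pow (w := w * b) hb hab).congr fun x => by
      simp only [comp_apply]; ring)]
  congr 1
  · exact tprod_congr fun x => by ring
  · exact tprod_congr fun x => by ring

-- Also true at the poles, where both sides are junk `0` (a factor `x / 0` on the left).
lemma ellGamma_eq_div {w a b : ℂ} (ha : ‖a‖ < 1) (hb : ‖b‖ < 1) :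
    ellGamma w a b = qPochInf₂ (w⁻¹ * a * b) a b / qPochInf₂ w a b := by
  by_cases h : ∃ j k : ℕ, w * a ^ j * b ^ k = 1
  · obtain ⟨j, k, h⟩ := h
    have hden : qPochInf₂ w a b = 0 := tprod_of_exists_eq_zero ⟨(j, k), by simp [h]⟩
    rw [ellGamma, hden, div_zero]
    exact tprod_of_exists_eq_zero ⟨(j, k), by simp [h]⟩
  · push Not at h
    rw [ellGamma, qPochInf₂, qPochInf₂,
      ← (multipliable_one_sub_mul_pow_mul_pow ha hb).tprod_div₀
        (multipliable_one_sub_mul_pow_mul_pow ha hb) (qPochInf₂_ne_zero ha hb h)]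
    exact tprod_congr fun x => by ring_nf

lemma ellGamma_shift {w a t : ℂ} (ha1 : ‖a‖ < 1) (ht1 : ‖t‖ < 1) (ha : a ≠ 0)
    (hw : qPochInf w t ≠ 0) : ellGamma (w * a) a t = theta0 w t * ellGamma w a t := by
  rw [ellGamma_eq_div ha1 ht1, ellGamma_eq_div ha1 ht1, theta0,
    qPochInf₂_eq_qPochInf_mul (w := w) ha1 ht1,
    qPochInf₂_eq_qPochInf_mul (w := (w * a)⁻¹ * a * t) ha1 ht1,
    show (w * a)⁻¹ * a * t = t * w⁻¹ by field_simp, ← mul_div_assoc,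
    mul_assoc (qPochInf w t), mul_div_mul_left _ _ hw]
  ring_nf

lemma ellGamma_mul_ellGamma {z p q : ℂ} (hp1 : ‖p‖ < 1) (hq1 : ‖q‖ < 1) (hq : q ≠ 0) :
    ellGamma z p (p * q) * ellGamma (q * z) q (p * q) = ellGamma z p q := by
  have hpq : ‖p * q‖ < 1 := norm_mul_lt_one hp1 hq1
  rw [ellGamma_eq_div hp1 hpq, ellGamma_eq_div hq1 hpq, ellGamma_eq_div hp1 hq1,
    ← mul_div_mul_comm, mul_comm q z, ← qPochInf₂_eq_mul hp1 hq1,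
    qPochInf₂_comm (z⁻¹ * p * q) p q, qPochInf₂_eq_mul hq1 hp1, mul_comm q p,
    mul_comm (qPochInf₂ (z⁻¹ * p * q) q (p * q))]
  congr 3 <;> field_simp

lemma notPole_iff {w P Q : ℂ} (hP : P ≠ 0) (hQ : Q ≠ 0) :
    notPole w P Q ↔ ∀ j k : ℕ, w * P ^ j * Q ^ k ≠ 1 := by
  refine forall₂_congr fun j k => not_congr ?_
  rw [zpow_neg, zpow_neg, zpow_natCast, zpow_natCast, ← mul_inv, mul_assoc]
  exact (mul_eq_one_iff_eq_inv₀ (mul_ne_zero (pow_ne_zero _ hP) (pow_ne_zero _ hQ))).symm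

lemma notPole.split_left {z p q : ℂ} (hp : p ≠ 0) (hq : q ≠ 0) (h : notPole z p q) :
    notPole z p (p * q) := by
  rw [notPole_iff hp hq] at h
  rw [notPole_iff hp (mul_ne_zero hp hq)]
  intro j k
  simpa [mul_pow, pow_add, mul_assoc, mul_comm, mul_left_comm] using h (j + k) k

lemma notPole.split_right {z p q : ℂ} (hp : p ≠ 0) (hq : q ≠ 0) (h : notPole z p q) :
    notPole (q * z) q (p * q) := by
  rw [notPole_iff hp hq] at h
  rw [notPole_iff hq (mul_ne_zero hp hq)]
  intro j k
  convert h k (j + k + 1) using 1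
  ring

lemma qPochInf_mul_zpow_ne_zero {x a t : ℂ} {m s : ℤ} (ha : a ≠ 0) (ht : t ≠ 0)
    (ht1 : ‖t‖ < 1) (hx : notPole x a t) (hxm : notPole (x * a ^ m) a t) (hs : min m 0 ≤ s) :
    qPochInf (x * a ^ s) t ≠ 0 := by
  rw [notPole_iff ha ht] at hx hxm
  refine qPochInf_ne_zero ht1 fun k => ?_
  rcases le_or_gt 0 s with h0 | h0
  · lift s to ℕ using h0
    simpa using hx s k
  · lift s - m to ℕ using (by omega) with d hd
    rw [show s = m + d by omega, zpow_add₀ ha, zpow_natCast, ← mul_assoc]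
    exact hxm d k

lemma ellGamma_shift_pow {x a t : ℂ} (ha1 : ‖a‖ < 1) (ht1 : ‖t‖ < 1) (ha : a ≠ 0) (n : ℕ)
    (h : ∀ s < n, qPochInf (x * a ^ s) t ≠ 0) :
    ellGamma (x * a ^ n) a t = (∏ j ∈ range n, theta0 (x * a ^ j) t) * ellGamma x a t := by
  induction n with
  | zero => simp
  | succ n ih =>
    rw [pow_succ, ← mul_assoc, ellGamma_shift ha1 ht1 ha (h n n.lt_succ_self),
      ih fun s hs => h s (hs.trans n.lt_succ_self), prod_range_succ]
    ring

lemma ellGamma_shift_zpow {x a t : ℂ} (ha1 : ‖a‖ < 1) (ht1 : ‖t‖ < 1) (ha : a ≠ 0)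
    (ht : t ≠ 0)
    {m : ℤ} (hx : notPole x a t) (hxm : notPole (x * a ^ m) a t)
    (hθ : ∀ j ∈ range m.natAbs, theta0 (x * a ^ (-(j : ℤ) - 1)) t ≠ 0) :
    ellGamma (x * a ^ m) a t = ellPoch x t a m * ellGamma x a t := by
  have hreg {s : ℤ} (hs : min m 0 ≤ s) : qPochInf (x * a ^ s) t ≠ 0 :=
    qPochInf_mul_zpow_ne_zero ha ht ht1 hx hxm hs
  rcases le_or_gt 0 m with hm | hm
  · lift m to ℕ using hm
    rw [ellPoch, if_pos (by positivity), zpow_natCast,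
      ellGamma_shift_pow ha1 ht1 ha m fun s _ => by simpa using hreg (s := s) (by omega)]
    simp
  · obtain ⟨n, rfl⟩ : ∃ n : ℕ, m = -n := ⟨(-m).toNat, by omega⟩
    have hup := ellGamma_shift_pow (x := x * a ^ (-(n : ℤ))) ha1 ht1 ha n fun s _ => by
      rw [mul_assoc, ← zpow_natCast, ← zpow_add₀ ha]
      exact hreg (by omega)
    have hprod : ∏ j ∈ range n, theta0 (x * a ^ (-(n : ℤ)) * a ^ j) t =
        ∏ j ∈ range n, theta0 (x * a ^ (-(j : ℤ) - 1)) t := by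
      rw [← prod_range_reflect]
      refine prod_congr rfl fun j hj => ?_
      have hj : j < n := mem_range.1 hj
      rw [mul_assoc, ← zpow_natCast, ← zpow_add₀ ha,
        show -(n : ℤ) + ((n - 1 - j : ℕ) : ℤ) = -(j : ℤ) - 1 by omega]
    have hP : ∏ j ∈ range n, theta0 (x * a ^ (-(j : ℤ) - 1)) t ≠ 0 :=
      prod_ne_zero_iff.2 fun j hj => hθ j (by simpa using hj)
    rw [hprod, mul_assoc, ← zpow_natCast, ← zpow_add₀ ha, neg_add_cancel, zpow_zero,
      mul_one] at hup
    rw [ellPoch, if_neg (by omega), neg_neg, Int.toNat_natCast, hup, ← mul_assoc,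
      inv_mul_cancel₀ hP, one_mul]

-- `∏_{0 ≤ j < m} u^j v^{j²}` for `m ≥ 0`; with `u = -z/σ`, `v = τ` the prefactor of `rarGamma`.
def rarefiedFactor (u v : ℂ) (m : ℤ) : ℂ :=
  u ^ (m * (m - 1) / 2) * v ^ (m * (m - 1) * (2 * m - 1) / 6)

lemma rarefiedFactor_add_one {u v : ℂ} (hu : u ≠ 0) (hv : v ≠ 0) (m : ℤ) :
    rarefiedFactor u v (m + 1) = u ^ m * v ^ (m ^ 2) * rarefiedFactor u v m := by
  have h₁ : (m + 1) * (m + 1 - 1) / 2 = m * (m - 1) / 2 + m := by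
    rw [show (m + 1) * (m + 1 - 1) = m * (m - 1) + m * 2 by ring,
      Int.add_mul_ediv_right _ _ two_ne_zero]
  have h₂ : (m + 1) * (m + 1 - 1) * (2 * (m + 1) - 1) / 6 =
      m * (m - 1) * (2 * m - 1) / 6 + m ^ 2 := by
    rw [show (m + 1) * (m + 1 - 1) * (2 * (m + 1) - 1) = m * (m - 1) * (2 * m - 1) + m ^ 2 * 6
      by ring, Int.add_mul_ediv_right _ _ (by norm_num)]
  rw [rarefiedFactor, rarefiedFactor, h₁, h₂, zpow_add₀ hu, zpow_add₀ hv]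
  ring

lemma ellPoch_eq_rarefiedFactor_mul {x y a b t u v : ℂ} (hu : u ≠ 0) (hv : v ≠ 0)
    (h : ∀ j : ℤ, theta0 (y * b ^ j) t = u ^ j * v ^ (j ^ 2) * theta0 (x * a ^ j) t) (m : ℤ) :
    ellPoch y t b m = rarefiedFactor u v m * ellPoch x t a m := by
  have hup (n : ℕ) : ∏ j ∈ range n, theta0 (y * b ^ (j : ℤ)) t =
      rarefiedFactor u v n * ∏ j ∈ range n, theta0 (x * a ^ (j : ℤ)) t := by
    induction n with
    | zero => simp [rarefiedFactor]
    | succ n ih =>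
      rw [prod_range_succ, prod_range_succ, ih, h, Nat.cast_succ, rarefiedFactor_add_one hu hv]
      ring
  have hdown (n : ℕ) : (∏ j ∈ range n, theta0 (y * b ^ (-(j : ℤ) - 1)) t)⁻¹ =
      rarefiedFactor u v (-n) * (∏ j ∈ range n, theta0 (x * a ^ (-(j : ℤ) - 1)) t)⁻¹ := by
    induction n with
    | zero => simp [rarefiedFactor]
    | succ n ih =>
      have hstep := rarefiedFactor_add_one hu hv (-(n : ℤ) - 1)
      rw [sub_add_cancel] at hstep
      rw [prod_range_succ, prod_range_succ, h, mul_inv, mul_inv, ih, hstep, Nat.cast_succ,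
        neg_add', mul_inv, mul_inv]
      field_simp
  rcases le_or_gt 0 m with hm | hm
  · lift m to ℕ using hm
    simp only [ellPoch, Nat.cast_nonneg, if_true, Int.toNat_natCast, hup]
  · lift -m to ℕ using (by omega) with n hn
    rw [ellPoch, ellPoch, if_neg hm.not_ge, if_neg hm.not_ge, ← hn, Int.toNat_natCast, hdown,
      hn, neg_neg]

lemma ellPoch_mul_neg {x a t : ℂ} (ha : a ≠ 0) (m : ℤ) :
    ellPoch (x * a) t a (-m) = (ellPoch x t a⁻¹ m)⁻¹ := by
  rcases lt_trichotomy m 0 with hm | rfl | hm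
  · rw [ellPoch, if_pos (by omega), ellPoch, if_neg (by omega), inv_inv]
    refine prod_congr rfl fun j _ => ?_
    rw [mul_assoc, ← zpow_one_add₀ ha, inv_zpow', neg_sub, sub_neg_eq_add, add_comm]
  · simp [ellPoch]
  · rw [ellPoch, if_neg (by omega), ellPoch, if_pos hm.le, neg_neg]
    refine congrArg _ (prod_congr rfl fun j _ => ?_)
    rw [mul_assoc, ← zpow_one_add₀ ha, inv_zpow', show 1 + (-(j : ℤ) - 1) = -j by ring]

lemma theta0_mul_inv_zpow {p q z σ τ : ℂ} (hpq1 : ‖p * q‖ < 1) (hq : q ≠ 0) (hσ0 : σ ≠ 0)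
    (hσ : σ ^ 2 = p * q) (hτ : τ * q = σ) (hz : z ≠ 0) (j : ℤ) :
    theta0 (z * q⁻¹ ^ j) (p * q) = (-z / σ) ^ j * τ ^ (j ^ 2) * theta0 (z * p ^ j) (p * q) := by
  rw [theta0_eq_mul_zpow hpq1 hσ0 hσ (mul_ne_zero hz (zpow_ne_zero _ (inv_ne_zero hq))) j,
    mul_assoc z, ← mul_zpow, show q⁻¹ * (p * q) = p by field_simp,
    show -(z * q⁻¹ ^ j) / σ = (-z / σ) * q⁻¹ ^ j by ring, ← hτ, mul_zpow, mul_zpow τ,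
    ← zpow_mul, ← sq, inv_zpow]
  field_simp

lemma rarefiedFactor_mul_ellPoch_mul_ellPoch {p q z σ τ : ℂ} (hp : p ≠ 0) (hq : q ≠ 0)
    (hpq1 : ‖p * q‖ < 1) (hσ : σ ^ 2 = p * q) (hστ : σ * τ = p) (hz : z ≠ 0) {m : ℤ}
    (hden1 : ∀ j ∈ range m.natAbs, theta0 (z * p ^ (-(j : ℤ) - 1)) (p * q) ≠ 0)
    (hden2 : ∀ j ∈ range m.natAbs, theta0 (q * z * q ^ (-(j : ℤ) - 1)) (p * q) ≠ 0) :
    rarefiedFactor (-z / σ) τ m * (ellPoch z (p * q) p m * ellPoch (q * z) (p * q) q (-m)) =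
      1 := by
  have hσ0 : σ ≠ 0 := by
    rintro rfl
    exact mul_ne_zero hp hq (by simpa using hσ.symm)
  have hτ0 : τ ≠ 0 := by
    rintro rfl
    exact hp (by simpa using hστ.symm)
  have hτ : τ * q = σ := mul_left_cancel₀ hσ0 (by rw [← mul_assoc, hστ, ← hσ, sq])
  have hu : -z / σ ≠ 0 := div_ne_zero (neg_ne_zero.2 hz) hσ0
  have hQ :=
    ellPoch_eq_rarefiedFactor_mul hu hτ0 (theta0_mul_inv_zpow hpq1 hq hσ0 hσ hτ hz) m
  have hQ0 : ellPoch z (p * q) q⁻¹ m ≠ 0 := by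
    rcases le_or_gt 0 m with hm | hm
    · rw [ellPoch, if_pos hm]
      refine prod_ne_zero_iff.2 fun j hj => ?_
      convert hden2 j (by simp at hj ⊢; omega) using 2
      rw [inv_zpow', zpow_sub_one₀ hq]
      field_simp
    · rw [hQ, ellPoch, if_neg hm.not_ge]
      exact mul_ne_zero (mul_ne_zero (zpow_ne_zero _ hu) (zpow_ne_zero _ hτ0))
        (inv_ne_zero (prod_ne_zero_iff.2 fun j hj => hden1 j (by simp at hj ⊢; omega)))
  rw [mul_comm q z, ellPoch_mul_neg hq, ← mul_assoc, ← hQ, mul_inv_cancel₀ hQ0]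

lemma mul_zpow_one_sub {z q : ℂ} (hq : q ≠ 0) (m : ℤ) :
    z * q ^ (((1 : ℕ) : ℤ) - m) = q * z * q ^ (-m) := by
  rw [Nat.cast_one, sub_eq_add_neg, zpow_add₀ hq, zpow_one]
  ring

lemma lensGamma_one {z p q : ℂ} (hq : q ≠ 0) (m : ℤ) :
    lensGamma 1 z m p q =
      ellGamma (z * p ^ m) p (p * q) * ellGamma (q * z * q ^ (-m)) q (p * q) := by
  rw [lensGamma, mul_zpow_one_sub hq, pow_one, pow_one]

lemma lensReg_one_iff {z p q : ℂ} (hq : q ≠ 0) (m : ℤ) :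
    lensReg 1 z m p q ↔
      notPole (z * p ^ m) p (p * q) ∧ notPole (q * z * q ^ (-m)) q (p * q) := by
  rw [lensReg, mul_zpow_one_sub hq, pow_one, pow_one]

lemma rarGamma_eq (r : ℕ) (z : ℂ) (m : ℤ) (p q σ τ : ℂ) :
    rarGamma r z m p q σ τ = rarefiedFactor (-z / σ) τ m * lensGamma r z m p q := rfl

theorem lensGamma_r_eq_one_general
    (p q σ τ : ℂ) (hp : p ≠ 0) (hq : q ≠ 0)
    (hp1 : ‖p‖ < 1) (hq1 : ‖q‖ < 1)
    (hσ : σ ^ 2 = p * q) (hστ : σ * τ = p)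
    (m : ℤ) (z : ℂ) (hz : z ≠ 0)
    (hreg1 : lensReg 1 z m p q)
    (hreg2 : notPole z p q)
    (hden1 : ∀ j ∈ Finset.range m.natAbs, theta0 (z * p ^ (-(j : ℤ) - 1)) (p * q) ≠ 0)
    (hden2 : ∀ j ∈ Finset.range m.natAbs, theta0 (q * z * q ^ (-(j : ℤ) - 1)) (p * q) ≠ 0) :
    lensGamma 1 z m p q =
        ellPoch z (p * q) p m * ellPoch (q * z) (p * q) q (-m) * ellGamma z p q ∧
      rarGamma 1 z m p q σ τ = ellGamma z p q := by
  have hpq : p * q ≠ 0 := mul_ne_zero hp hq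
  have hpq1 : ‖p * q‖ < 1 := norm_mul_lt_one hp1 hq1
  rw [lensReg_one_iff hq] at hreg1
  have hlens : lensGamma 1 z m p q =
      ellPoch z (p * q) p m * ellPoch (q * z) (p * q) q (-m) * ellGamma z p q := by
    rw [lensGamma_one hq,
      ellGamma_shift_zpow hp1 hpq1 hp hpq (hreg2.split_left hp hq) hreg1.1 hden1,
      ellGamma_shift_zpow hq1 hpq1 hq hpq (hreg2.split_right hp hq) hreg1.2
        (by simpa only [Int.natAbs_neg] using hden2),
      ← ellGamma_mul_ellGamma hp1 hq1 hq]
    ring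
  refine ⟨hlens, ?_⟩
  rw [rarGamma_eq, hlens]
  linear_combination (ellGamma z p q) *
    rarefiedFactor_mul_ellPoch_mul_ellPoch hp hq hpq1 hσ hστ hz hden1 hden2

/-- For `r = 1`: `γ^{(1)}(z,m;p,q) = θ(z;pq|p)_m θ(qz;pq|q)_{−m} Γ(z;p,q)` and hence
`Γ^{(1)}(z,m;p,q) = Γ(z;p,q)` for all `m ∈ ℤ` (formulae (3.8) and below (3.12)). -/
theorem lensGamma_r_eq_one
    (p q σ τ : ℂ) (hp : p ≠ 0) (hq : q ≠ 0)
    (hp1 : ‖p‖ < 1) (hq1 : ‖q‖ < 1)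
    (hσ : σ ^ 2 = p * q) (hτ : τ ^ 2 = p / q) (hστ : σ * τ = p)
    (m : ℤ) (z : ℂ) (hz : z ≠ 0)
    (hreg1 : lensReg 1 z m p q)
    (hreg2 : notPole z p q)
    (hden1 : ∀ j ∈ Finset.range m.natAbs, theta0 (z * p ^ (-(j : ℤ) - 1)) (p * q) ≠ 0)
    (hden2 : ∀ j ∈ Finset.range m.natAbs, theta0 (q * z * q ^ (-(j : ℤ) - 1)) (p * q) ≠ 0) :
    lensGamma 1 z m p q =
        ellPoch z (p * q) p m * ellPoch (q * z) (p * q) q (-m) * ellGamma z p q ∧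
      rarGamma 1 z m p q σ τ = ellGamma z p q :=
  lensGamma_r_eq_one_general p q σ τ hp hq hp1 hq1 hσ hστ m z hz hreg1 hreg2 hden1 hden2
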